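/- arXiv:1810.12227 — 2 statements merged into one kernel-verified Lean document; each statement's English description precedes it below -/
import Mathlib

section
/- The homogeneous Hölder seminorm [ψ]_{γ,d} := sup_{x≠x'} |ψ(x)−ψ(x')| / d(x,x')^γ is equivalent to the anisotropic norm Σ_{i=1}^{n} sup_z ‖ψ_i(z,·)‖_{C^{γ/(2i−1)}(ℝ^d)}: there exists C = C(n,d) ≥ 1 such that C^{-1} [ψ]_{γ,d} ≤ Σ_{i=1}^{n} sup_{z∈ℝ^{nd}} ‖ψ_i(z,·)‖_{C^{γ/(2i−1)}(ℝ^d)} ≤ C [ψ]_{γ,d} for every bounded ψ : ℝ^{nd} → ℝ for which either side is finite. -/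
/-!
Changing one block `x_i` by `w - w'` moves the quasi-distance by exactly `‖w - w'‖^{1/(2i+1)}`,
so each block seminorm is bounded by `[ψ]_{γ,d}`; summing gives the upper bound with `C = n`.
Conversely, pass from `x` to `x'` one block at a time: the `i`-th step costs at most the `i`-th
block seminorm times `‖x'_i - x_i‖^{γ/(2i+1)} ≤ d(x,x')^γ`, and the steps telescope.
-/

open scoped BigOperators ENNReal

/-- The spatial anisotropic quasi-distance `d(x,y) = ∑_i |y_i - x_i|^{1/(2i-1)}`. -/
noncomputable def quasiDist (n d : ℕ) (x y : Fin n → EuclideanSpace ℝ (Fin d)) : ℝ :=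
  ∑ i : Fin n, ‖y i - x i‖ ^ ((1 : ℝ) / (2 * (i : ℕ) + 1))

/-- The homogeneous Hölder seminorm `[ψ]_{γ,d} = sup_{x ≠ x'} |ψ(x)-ψ(x')|/d(x,x')^γ`
(valued in `ℝ≥0∞` so that it is always defined). -/
noncomputable def holderSemiD (n d : ℕ) (γ : ℝ)
    (ψ : (Fin n → EuclideanSpace ℝ (Fin d)) → ℝ) : ℝ≥0∞ :=
  ⨆ (x : Fin n → EuclideanSpace ℝ (Fin d)) (x' : Fin n → EuclideanSpace ℝ (Fin d))
    (_ : x ≠ x'), ENNReal.ofReal (|ψ x - ψ x'| / quasiDist n d x x' ^ γ)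

/-- The anisotropic seminorm `∑_i sup_z ‖ψ_i(z,·)‖_{C^{γ/(2i-1)}(ℝ^d)}`, where
`ψ_i(z,x) = ψ(z₁,…,z_i + x,…,z_n)` is the perturbation of the `i`-th block variable. -/
noncomputable def anisotropicSemi (n d : ℕ) (γ : ℝ)
    (ψ : (Fin n → EuclideanSpace ℝ (Fin d)) → ℝ) : ℝ≥0∞ :=
  ∑ i : Fin n,
    ⨆ (z : Fin n → EuclideanSpace ℝ (Fin d)) (u : EuclideanSpace ℝ (Fin d))
      (v : EuclideanSpace ℝ (Fin d)) (_ : u ≠ v),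
      ENNReal.ofReal
        (|ψ (Function.update z i (z i + u)) - ψ (Function.update z i (z i + v))| /
          ‖u - v‖ ^ (γ / (2 * (i : ℕ) + 1)))

/-- The point whose first `k` blocks are taken from `x'` and the remaining ones from `x`. -/
def hybrid {α : Type*} {n : ℕ} (x x' : Fin n → α) (k : ℕ) : Fin n → α :=
  fun j => if (j : ℕ) < k then x' j else x j

section Hybrid

variable {α : Type*} {n : ℕ} (x x' : Fin n → α)

@[simp]
lemma hybrid_zero : hybrid x x' 0 = x :=
  funext fun _ => if_neg (Nat.not_lt_zero _)

@[simp]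
lemma hybrid_length : hybrid x x' n = x' :=
  funext fun j => if_pos j.isLt

@[simp]
lemma hybrid_apply_self (i : Fin n) : hybrid x x' i i = x i :=
  if_neg (lt_irrefl _)

lemma hybrid_succ (i : Fin n) :
    hybrid x x' ((i : ℕ) + 1) = Function.update (hybrid x x' i) i (x' i) := by
  funext j
  rcases eq_or_ne j i with rfl | hji
  · simp [hybrid]
  · have : (j : ℕ) ≠ i := Fin.val_ne_of_ne hji
    simp only [hybrid, Function.update_of_ne hji]
    exact if_congr (by omega) rfl rfl

lemma abs_sub_le_sum_abs_sub_hybrid (f : (Fin n → α) → ℝ) :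
    |f x - f x'| ≤ ∑ i : Fin n, |f (hybrid x x' ((i : ℕ) + 1)) - f (hybrid x x' i)| := by
  have htelescope :
      f x' - f x = ∑ i : Fin n, (f (hybrid x x' ((i : ℕ) + 1)) - f (hybrid x x' i)) := by
    rw [Fin.sum_univ_eq_sum_range (fun k => f (hybrid x x' (k + 1)) - f (hybrid x x' k)) n,
      Finset.sum_range_sub (fun k => f (hybrid x x' k)) n, hybrid_zero, hybrid_length]
  rw [abs_sub_comm, htelescope]
  exact Finset.abs_sum_le_sum_abs _ _

end Hybrid

section QuasiDist

variable {n d : ℕ}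

lemma quasiDist_pos {x y : Fin n → EuclideanSpace ℝ (Fin d)} (h : x ≠ y) :
    0 < quasiDist n d x y := by
  obtain ⟨i, hi⟩ := Function.ne_iff.mp h
  refine Finset.sum_pos' (fun j _ => by positivity) ⟨i, Finset.mem_univ i, ?_⟩
  exact Real.rpow_pos_of_pos (norm_pos_iff.mpr (sub_ne_zero.mpr hi.symm)) _

lemma norm_sub_rpow_le_quasiDist (x y : Fin n → EuclideanSpace ℝ (Fin d)) (i : Fin n) :
    ‖y i - x i‖ ^ ((1 : ℝ) / (2 * (i : ℕ) + 1)) ≤ quasiDist n d x y :=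
  Finset.single_le_sum (f := fun j => ‖y j - x j‖ ^ ((1 : ℝ) / (2 * (j : ℕ) + 1)))
    (fun _ _ => by positivity) (Finset.mem_univ i)

lemma quasiDist_update_update (z : Fin n → EuclideanSpace ℝ (Fin d)) (i : Fin n)
    (w w' : EuclideanSpace ℝ (Fin d)) :
    quasiDist n d (Function.update z i w) (Function.update z i w')
      = ‖w - w'‖ ^ ((1 : ℝ) / (2 * (i : ℕ) + 1)) := by
  rw [quasiDist, Finset.sum_eq_single_of_mem i (Finset.mem_univ i)]
  · rw [Function.update_self, Function.update_self, norm_sub_rev]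
  · intro j _ hj
    rw [Function.update_of_ne hj, Function.update_of_ne hj, sub_self, norm_zero,
      Real.zero_rpow (by positivity)]

lemma rpow_one_div_rpow {t : ℝ} (ht : 0 ≤ t) (c γ : ℝ) :
    (t ^ ((1 : ℝ) / c)) ^ γ = t ^ (γ / c) := by
  rw [← Real.rpow_mul ht, one_div_mul_eq_div]

lemma norm_sub_rpow_le_quasiDist_rpow {γ : ℝ} (hγ : 0 ≤ γ)
    (x y : Fin n → EuclideanSpace ℝ (Fin d)) (i : Fin n) :
    ‖y i - x i‖ ^ (γ / (2 * (i : ℕ) + 1)) ≤ quasiDist n d x y ^ γ := by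
  rw [← rpow_one_div_rpow (norm_nonneg _)]
  exact Real.rpow_le_rpow (by positivity) (norm_sub_rpow_le_quasiDist x y i) hγ

end QuasiDist

noncomputable def blockHolderSemi (n d : ℕ) (γ : ℝ)
    (ψ : (Fin n → EuclideanSpace ℝ (Fin d)) → ℝ) (i : Fin n) : ℝ≥0∞ :=
  ⨆ (z : Fin n → EuclideanSpace ℝ (Fin d)) (u : EuclideanSpace ℝ (Fin d))
    (v : EuclideanSpace ℝ (Fin d)) (_ : u ≠ v),
    ENNReal.ofReal
      (|ψ (Function.update z i (z i + u)) - ψ (Function.update z i (z i + v))| /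
        ‖u - v‖ ^ (γ / (2 * (i : ℕ) + 1)))

section Seminorms

variable {n d : ℕ} {γ : ℝ} (ψ : (Fin n → EuclideanSpace ℝ (Fin d)) → ℝ)

lemma anisotropicSemi_eq_sum_blockHolderSemi :
    anisotropicSemi n d γ ψ = ∑ i, blockHolderSemi n d γ ψ i :=
  rfl

lemma ofReal_abs_sub_update_le_blockHolderSemi_mul (z : Fin n → EuclideanSpace ℝ (Fin d))
    (i : Fin n) (w w' : EuclideanSpace ℝ (Fin d)) :
    ENNReal.ofReal |ψ (Function.update z i w) - ψ (Function.update z i w')| ≤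
      blockHolderSemi n d γ ψ i * ENNReal.ofReal (‖w - w'‖ ^ (γ / (2 * (i : ℕ) + 1))) := by
  rcases eq_or_ne w w' with rfl | hww'
  · simp
  set r := ‖w - w'‖ ^ (γ / (2 * (i : ℕ) + 1))
  have hr : 0 < r := Real.rpow_pos_of_pos (norm_pos_iff.mpr (sub_ne_zero.mpr hww')) _
  -- Recentre at `z` with its `i`-th block set to `0`, so that `z i + w = w`.
  have hquotient :
      ENNReal.ofReal (|ψ (Function.update z i w) - ψ (Function.update z i w')| / r) ≤
        blockHolderSemi n d γ ψ i := by
    refine le_iSup_of_le (Function.update z i 0) (le_iSup_of_le w (le_iSup_of_le w'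
      (le_iSup_of_le hww' ?_)))
    simp only [Function.update_self, zero_add, Function.update_idem]
    rfl
  calc ENNReal.ofReal |ψ (Function.update z i w) - ψ (Function.update z i w')|
      = ENNReal.ofReal (|ψ (Function.update z i w) - ψ (Function.update z i w')| / r) *
          ENNReal.ofReal r := by
        rw [← ENNReal.ofReal_mul (by positivity), div_mul_cancel₀ _ hr.ne']
    _ ≤ _ := by gcongr

lemma blockHolderSemi_le_holderSemiD (i : Fin n) :
    blockHolderSemi n d γ ψ i ≤ holderSemiD n d γ ψ := by
  refine iSup_le fun z => iSup_le fun u => iSup_le fun v => iSup_le fun huv => ?_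
  have hne : Function.update z i (z i + u) ≠ Function.update z i (z i + v) := fun h =>
    huv (add_left_cancel (by simpa using congrFun h i : z i + u = z i + v))
  have hdist : quasiDist n d (Function.update z i (z i + u)) (Function.update z i (z i + v)) ^ γ
      = ‖u - v‖ ^ (γ / (2 * (i : ℕ) + 1)) := by
    rw [quasiDist_update_update, add_sub_add_left_eq_sub, rpow_one_div_rpow (norm_nonneg _)]
  rw [← hdist]
  exact le_iSup_of_le _ (le_iSup_of_le _ (le_iSup_of_le hne le_rfl))

lemma anisotropicSemi_le_card_mul_holderSemiD :
    anisotropicSemi n d γ ψ ≤ n * holderSemiD n d γ ψ := by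
  calc anisotropicSemi n d γ ψ = ∑ i, blockHolderSemi n d γ ψ i :=
        anisotropicSemi_eq_sum_blockHolderSemi ψ
    _ ≤ ∑ _i : Fin n, holderSemiD n d γ ψ :=
        Finset.sum_le_sum fun i _ => blockHolderSemi_le_holderSemiD ψ i
    _ = n * holderSemiD n d γ ψ := by simp

lemma ofReal_abs_sub_le_anisotropicSemi_mul (hγ : 0 ≤ γ)
    (x x' : Fin n → EuclideanSpace ℝ (Fin d)) :
    ENNReal.ofReal |ψ x - ψ x'| ≤
      anisotropicSemi n d γ ψ * ENNReal.ofReal (quasiDist n d x x' ^ γ) := by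
  have hstep : ∀ i : Fin n, ENNReal.ofReal
      |ψ (hybrid x x' ((i : ℕ) + 1)) - ψ (hybrid x x' i)| ≤
        blockHolderSemi n d γ ψ i * ENNReal.ofReal (quasiDist n d x x' ^ γ) := by
    intro i
    have hcur : Function.update (hybrid x x' i) i (x i) = hybrid x x' i := by
      rw [← hybrid_apply_self x x' i, Function.update_eq_self]
    have hblock := ofReal_abs_sub_update_le_blockHolderSemi_mul (γ := γ) ψ
      (hybrid x x' i) i (x i) (x' i)
    rw [hcur] at hblock
    rw [hybrid_succ, abs_sub_comm]
    refine hblock.trans ?_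
    gcongr
    rw [norm_sub_rev]
    exact norm_sub_rpow_le_quasiDist_rpow hγ x x' i
  calc ENNReal.ofReal |ψ x - ψ x'|
      ≤ ENNReal.ofReal (∑ i : Fin n, |ψ (hybrid x x' ((i : ℕ) + 1)) - ψ (hybrid x x' i)|) :=
        ENNReal.ofReal_le_ofReal (abs_sub_le_sum_abs_sub_hybrid x x' ψ)
    _ = ∑ i : Fin n, ENNReal.ofReal |ψ (hybrid x x' ((i : ℕ) + 1)) - ψ (hybrid x x' i)| :=
        ENNReal.ofReal_sum_of_nonneg fun _ _ => abs_nonneg _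
    _ ≤ ∑ i, blockHolderSemi n d γ ψ i * ENNReal.ofReal (quasiDist n d x x' ^ γ) :=
        Finset.sum_le_sum fun i _ => hstep i
    _ = anisotropicSemi n d γ ψ * ENNReal.ofReal (quasiDist n d x x' ^ γ) := by
        rw [anisotropicSemi_eq_sum_blockHolderSemi, Finset.sum_mul]

lemma holderSemiD_le_anisotropicSemi (hγ : 0 ≤ γ) :
    holderSemiD n d γ ψ ≤ anisotropicSemi n d γ ψ := by
  refine iSup_le fun x => iSup_le fun x' => iSup_le fun hne => ?_
  have hdist : 0 < quasiDist n d x x' ^ γ := Real.rpow_pos_of_pos (quasiDist_pos hne) γ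
  rw [ENNReal.ofReal_div_of_pos hdist]
  exact ENNReal.div_le_of_le_mul (ofReal_abs_sub_le_anisotropicSemi_mul ψ hγ x x')

end Seminorms

theorem holder_anisotropic_equiv_general (n d : ℕ) (hn : 1 ≤ n)
    (γ : ℝ) (hγ0 : 0 < γ) :
    ∃ C : ℝ≥0∞, 1 ≤ C ∧ C ≠ ⊤ ∧
      ∀ ψ : (Fin n → EuclideanSpace ℝ (Fin d)) → ℝ,
        (∃ M : ℝ, ∀ x, |ψ x| ≤ M) →
        holderSemiD n d γ ψ ≤ C * anisotropicSemi n d γ ψ ∧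
        anisotropicSemi n d γ ψ ≤ C * holderSemiD n d γ ψ := by
  have hC : (1 : ℝ≥0∞) ≤ n := by exact_mod_cast hn
  refine ⟨n, hC, ENNReal.natCast_ne_top n, fun ψ _ =>
    ⟨?_, anisotropicSemi_le_card_mul_holderSemiD ψ⟩⟩
  calc holderSemiD n d γ ψ ≤ anisotropicSemi n d γ ψ :=
        holderSemiD_le_anisotropicSemi ψ hγ0.le
    _ ≤ n * anisotropicSemi n d γ ψ := le_mul_of_one_le_left' hC

/-- equivalence of the homogeneous Hölder seminorm `[ψ]_{γ,d}` and the
anisotropic norm `∑_i sup_z ‖ψ_i(z,·)‖_{C^{γ/(2i-1)}}` : there is `C = C(n,d) ≥ 1` with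
`C⁻¹ [ψ]_{γ,d} ≤ ∑_i sup_z ‖ψ_i(z,·)‖ ≤ C [ψ]_{γ,d}` for every bounded `ψ`. -/
theorem holder_anisotropic_equiv (n d : ℕ) (hn : 1 ≤ n) (hd : 1 ≤ d)
    (γ : ℝ) (hγ0 : 0 < γ) (hγ1 : γ < 1) :
    ∃ C : ℝ≥0∞, 1 ≤ C ∧ C ≠ ⊤ ∧
      ∀ ψ : (Fin n → EuclideanSpace ℝ (Fin d)) → ℝ,
        (∃ M : ℝ, ∀ x, |ψ x| ≤ M) →
        holderSemiD n d γ ψ ≤ C * anisotropicSemi n d γ ψ ∧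
        anisotropicSemi n d γ ψ ≤ C * holderSemiD n d γ ψ :=
  holder_anisotropic_equiv_general n d hn γ hγ0
end

section
/- Resolvent scaling bound: the resolvent R̃^{(τ,ξ)}(s,t) of the frozen linear system can be written as T_{s−t} R̂^{(τ,ξ),s,t}(1,0) T_{s−t}^{-1} where R̂^{(τ,ξ),s,t}(1,0) is the resolvent at time 1 of the rescaled system, and there exists Ĉ₁ (independent of s, t, ξ, τ) such that |R̂^{(τ,ξ),s,t}(1,0)* ζ| ≤ Ĉ₁ |ζ| for all ζ ∈ ℝ^{nd}; consequently |[R̃^{(τ,ξ)}(s,t)]_{i,j}| ≤ Ĉ₁ (s−t)^{i−j} for all block indices i, j. -/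
/-!
The generator only moves block level `j - 1` to level `j`, so the entries of `R(v)` in block
`(i, j)` vanish for `i < j` and, by induction on `i - j` through the comparison principle, are
bounded by `(c (v - t)) ^ (i - j) / (i - j)!` with `c = nd · L`. Conjugation by `T_{s-t}` removes
exactly the factor `(s - t) ^ (i - j)`, so the rescaled resolvent has all entries bounded by
`exp c`, and Cauchy–Schwarz turns this entrywise bound into the bound on `|R̂* ζ|`.
-/

open Set Real Nat

def IsBlockSubdiagonal {ι α : Type*} [Zero α] (lev : ι → ℕ) (A : Matrix ι ι α) : Prop :=
  ∀ p q, A p q ≠ 0 → lev p = lev q + 1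

namespace IsBlockSubdiagonal

variable {ι κ : Type*} [Fintype ι] {lev : ι → ℕ}

theorem mul_apply_eq_zero {α : Type*} [NonUnitalNonAssocSemiring α] {A : Matrix ι ι α}
    {B : Matrix ι κ α} (hA : IsBlockSubdiagonal lev A) {p : ι} {q : κ}
    (hB : ∀ p', lev p = lev p' + 1 → B p' q = 0) : (A * B) p q = 0 := by
  rw [Matrix.mul_apply]
  refine Finset.sum_eq_zero fun p' _ => ?_
  by_cases h : A p p' = 0
  · rw [h, zero_mul]
  · rw [hB p' (hA p p' h), mul_zero]

theorem abs_mul_apply_le {A : Matrix ι ι ℝ} {B : Matrix ι κ ℝ} (hA : IsBlockSubdiagonal lev A)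
    {L K : ℝ} (hAL : ∀ p p', |A p p'| ≤ L) (hL : 0 ≤ L) (hK : 0 ≤ K) {p : ι} {q : κ}
    (hB : ∀ p', lev p = lev p' + 1 → |B p' q| ≤ K) :
    |(A * B) p q| ≤ Fintype.card ι * L * K := by
  calc |(A * B) p q| ≤ ∑ p', |A p p' * B p' q| := Finset.abs_sum_le_sum_abs _ _
    _ ≤ ∑ _p' : ι, L * K := Finset.sum_le_sum fun p' _ => ?_
    _ = Fintype.card ι * L * K := by simp [mul_assoc]
  rw [abs_mul]
  by_cases h : A p p' = 0
  · rw [h, abs_zero, zero_mul]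
    positivity
  · exact mul_le_mul (hAL p p') (hB p' (hA p p' h)) (abs_nonneg _) hL

end IsBlockSubdiagonal

section Resolvent

variable {ι : Type*} [Fintype ι] [DecidableEq ι] {lev : ι → ℕ} {M R : ℝ → Matrix ι ι ℝ}
  {t s L : ℝ}

theorem resolvent_apply_eq_one_apply (hR0 : R t = 1)
    (hR : ∀ v ∈ Icc t s, ∀ p q, HasDerivAt (fun u => R u p q) ((M v * R v) p q) v) {p q : ι}
    (hMR : ∀ v ∈ Icc t s, (M v * R v) p q = 0) : ∀ v ∈ Icc t s, R v p q = (1 : Matrix ι ι ℝ) p q := by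
  intro v hv
  refine (constant_of_has_deriv_right_zero
    (fun x hx => (hR x hx p q).continuousAt.continuousWithinAt) (fun x hx => ?_) v hv).trans
    (by rw [hR0])
  have hx := Ico_subset_Icc_self hx
  simpa only [hMR x hx] using (hR x hx p q).hasDerivWithinAt

theorem resolvent_apply_eq_zero_of_lt (hM : ∀ v, IsBlockSubdiagonal lev (M v)) (hR0 : R t = 1)
    (hR : ∀ v ∈ Icc t s, ∀ p q, HasDerivAt (fun u => R u p q) ((M v * R v) p q) v) :
    ∀ p q, lev p < lev q → ∀ v ∈ Icc t s, R v p q = 0 := by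
  intro p
  induction hp : lev p using Nat.strong_induction_on generalizing p with
  | _ m ih =>
    intro q hpq v hv
    have hne : p ≠ q := by rintro rfl; omega
    rw [resolvent_apply_eq_one_apply hR0 hR (fun x hx => (hM x).mul_apply_eq_zero
      fun p' hp' => ih (lev p') (by omega) p' rfl q (by omega) x hx) v hv, Matrix.one_apply_ne hne]

theorem hasDerivAt_pow_div_factorial (c t : ℝ) (k : ℕ) (x : ℝ) :
    HasDerivAt (fun u => (c * (u - t)) ^ (k + 1) / (k + 1)!) (c * ((c * (x - t)) ^ k / k !)) x := by
  refine (((((hasDerivAt_id' x).sub_const t).const_mul c).pow (k + 1)).div_const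
    ((k + 1)! : ℝ)).congr_deriv ?_
  rw [Nat.factorial_succ]
  push_cast
  field_simp

theorem abs_resolvent_apply_le (hM : ∀ v, IsBlockSubdiagonal lev (M v))
    (hML : ∀ v p q, |M v p q| ≤ L) (hL : 0 ≤ L) (hR0 : R t = 1)
    (hR : ∀ v ∈ Icc t s, ∀ p q, HasDerivAt (fun u => R u p q) ((M v * R v) p q) v) :
    ∀ k p q, lev p = lev q + k → ∀ v ∈ Icc t s,
      |R v p q| ≤ (Fintype.card ι * L * (v - t)) ^ k / k ! := by
  set c : ℝ := Fintype.card ι * L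
  have hc : 0 ≤ c := by positivity
  intro k
  induction k with
  | zero =>
    intro p q hpq v hv
    have hMR : ∀ x ∈ Icc t s, (M x * R x) p q = 0 := fun x hx => (hM x).mul_apply_eq_zero
      fun p' hp' => resolvent_apply_eq_zero_of_lt hM hR0 hR p' q (by omega) x hx
    rw [resolvent_apply_eq_one_apply hR0 hR hMR v hv, Matrix.one_apply]
    split_ifs <;> simp
  | succ k ih =>
    intro p q hpq v hv
    have hne : p ≠ q := by rintro rfl; omega
    have hstart : ‖R t p q‖ ≤ (c * (t - t)) ^ (k + 1) / (k + 1)! := by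
      simp [hR0, Matrix.one_apply_ne hne]
    have hbound : ∀ x ∈ Ico t s, ‖(M x * R x) p q‖ ≤ c * ((c * (x - t)) ^ k / k !) := by
      intro x hx
      have hxt : 0 ≤ c * (x - t) := mul_nonneg hc (sub_nonneg.2 hx.1)
      exact (hM x).abs_mul_apply_le (hML x) hL (by positivity)
        fun p' hp' => ih p' q (by omega) x (Ico_subset_Icc_self hx)
    simpa only [Real.norm_eq_abs] using image_norm_le_of_norm_deriv_right_le_deriv_boundary
      (fun x hx => (hR x hx p q).continuousAt.continuousWithinAt)
      (fun x hx => (hR x (Ico_subset_Icc_self hx) p q).hasDerivWithinAt) hstart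
      (hasDerivAt_pow_div_factorial c t k) hbound hv

theorem abs_resolvent_apply_le_exp_mul_rpow (hM : ∀ v, IsBlockSubdiagonal lev (M v))
    (hML : ∀ v p q, |M v p q| ≤ L) (hL : 0 ≤ L) (hR0 : R t = 1)
    (hR : ∀ v ∈ Icc t s, ∀ p q, HasDerivAt (fun u => R u p q) ((M v * R v) p q) v)
    (hts : t ≤ s) (p q : ι) :
    |R s p q| ≤ exp (Fintype.card ι * L) * (s - t) ^ ((lev p : ℝ) - lev q) := by
  set c : ℝ := Fintype.card ι * L
  have hc : 0 ≤ c := by positivity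
  have hst : 0 ≤ s - t := sub_nonneg.2 hts
  rcases lt_or_ge (lev p) (lev q) with hlt | hle
  · rw [resolvent_apply_eq_zero_of_lt hM hR0 hR p q hlt s (right_mem_Icc.2 hts), abs_zero]
    exact mul_nonneg (exp_pos c).le (rpow_nonneg hst _)
  · obtain ⟨k, hk⟩ := Nat.exists_eq_add_of_le hle
    rw [show (lev p : ℝ) - lev q = k by rw [hk]; push_cast; ring, rpow_natCast]
    calc |R s p q| ≤ (c * (s - t)) ^ k / k ! :=
          abs_resolvent_apply_le hM hML hL hR0 hR k p q hk s (right_mem_Icc.2 hts)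
      _ = c ^ k / k ! * (s - t) ^ k := by rw [mul_pow]; ring
      _ ≤ exp c * (s - t) ^ k := by gcongr; exact pow_div_factorial_le_exp _ hc k

end Resolvent

theorem abs_rpow_neg_mul_mul_rpow_le {u x C a b : ℝ} (hu : 0 < u) (hx : |x| ≤ C * u ^ (a - b)) :
    |u ^ (-a) * x * u ^ b| ≤ C := by
  rw [abs_mul, abs_mul, abs_of_pos (rpow_pos_of_pos hu _), abs_of_pos (rpow_pos_of_pos hu _)]
  calc u ^ (-a) * |x| * u ^ b ≤ u ^ (-a) * (C * u ^ (a - b)) * u ^ b := by gcongr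
    _ = C * (u ^ (-a + (a - b) + b)) := by rw [rpow_add hu, rpow_add hu]; ring
    _ = C := by rw [show -a + (a - b) + b = 0 by ring, rpow_zero, mul_one]

theorem sqrt_sum_sq_sum_mul_le {ι : Type*} [Fintype ι] {A : ι → ι → ℝ} {K : ℝ} (hK : 0 ≤ K)
    (hA : ∀ p q, |A p q| ≤ K) (ζ : ι → ℝ) :
    √(∑ q, (∑ p, A p q * ζ p) ^ 2) ≤ Fintype.card ι * K * √(∑ p, ζ p ^ 2) := by
  have hcol : ∀ q, (∑ p, A p q * ζ p) ^ 2 ≤ Fintype.card ι * K ^ 2 * ∑ p, ζ p ^ 2 := fun q =>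
    calc (∑ p, A p q * ζ p) ^ 2 ≤ (∑ p, A p q ^ 2) * ∑ p, ζ p ^ 2 :=
          Finset.sum_mul_sq_le_sq_mul_sq _ _ _
      _ ≤ (∑ _p : ι, K ^ 2) * ∑ p, ζ p ^ 2 := by
          refine mul_le_mul_of_nonneg_right (Finset.sum_le_sum fun p _ => ?_) (by positivity)
          simpa only [sq_abs] using pow_le_pow_left₀ (abs_nonneg _) (hA p q) 2
      _ = Fintype.card ι * K ^ 2 * ∑ p, ζ p ^ 2 := by simp
  calc √(∑ q, (∑ p, A p q * ζ p) ^ 2) ≤ √((Fintype.card ι * K) ^ 2 * ∑ p, ζ p ^ 2) := by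
        refine Real.sqrt_le_sqrt ((Finset.sum_le_sum fun q _ => hcol q).trans_eq ?_)
        simp only [Finset.sum_const, Finset.card_univ, nsmul_eq_mul]
        ring
    _ = Fintype.card ι * K * √(∑ p, ζ p ^ 2) := by
        rw [Real.sqrt_mul (sq_nonneg _), Real.sqrt_sq (by positivity)]

theorem resolvent_scaling_bound_general (n d : ℕ)
    (T L : ℝ) (hL : 0 < L) :
    ∃ C : ℝ, 0 < C ∧
      ∀ t s : ℝ, 0 ≤ t → t ≤ s → s ≤ T →
      ∀ M : ℝ → Matrix (Fin n × Fin d) (Fin n × Fin d) ℝ,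
        (∀ v (p q : Fin n × Fin d), M v p q ≠ 0 → (p.1 : ℕ) = (q.1 : ℕ) + 1) →
        (∀ v (p q : Fin n × Fin d), |M v p q| ≤ L) →
      ∀ R : ℝ → Matrix (Fin n × Fin d) (Fin n × Fin d) ℝ,
        R t = 1 →
        (∀ v ∈ Set.Icc t s, ∀ p q : Fin n × Fin d,
          HasDerivAt (fun u => R u p q) ((M v * R v) p q) v) →
        -- uniform bound for (the adjoint of) the rescaled resolvent
        -- `R̂ = T_{s-t}⁻¹ R̃(s,t) T_{s-t}`
        (t < s → ∀ ζ : (Fin n × Fin d) → ℝ,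
          Real.sqrt (∑ q : Fin n × Fin d,
              (∑ p : Fin n × Fin d,
                (s - t) ^ (-(((p.1 : ℕ) : ℝ) + 1)) * R s p q
                  * (s - t) ^ (((q.1 : ℕ) : ℝ) + 1) * ζ p) ^ 2)
            ≤ C * Real.sqrt (∑ p : Fin n × Fin d, ζ p ^ 2)) ∧
        -- blockwise bound on the resolvent itself
        (∀ p q : Fin n × Fin d,
          |R s p q| ≤ C * (s - t) ^ (((p.1 : ℕ) : ℝ) - ((q.1 : ℕ) : ℝ))) := by
  set N : ℝ := (Fintype.card (Fin n × Fin d) : ℝ)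
  refine ⟨(N + 1) * exp (N * L), by positivity, ?_⟩
  intro t s _ hts _ M hM hML R hR0 hR
  have hsub : ∀ v, IsBlockSubdiagonal (fun p : Fin n × Fin d => (p.1 : ℕ)) (M v) := hM
  have hblock : ∀ p q : Fin n × Fin d,
      |R s p q| ≤ exp (N * L) * (s - t) ^ (((p.1 : ℕ) : ℝ) - ((q.1 : ℕ) : ℝ)) :=
    abs_resolvent_apply_le_exp_mul_rpow hsub hML hL.le hR0 hR hts
  have hN : 0 ≤ N := by positivity
  refine ⟨fun hlt ζ => ?_, fun p q => (hblock p q).trans ?_⟩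
  · refine (sqrt_sum_sq_sum_mul_le (exp_pos _).le (fun p q => abs_rpow_neg_mul_mul_rpow_le
      (sub_pos.2 hlt) ?_) ζ).trans (by gcongr; exact (lt_add_one N).le)
    convert hblock p q using 3
    ring
  · exact mul_le_mul_of_nonneg_right (le_mul_of_one_le_left (exp_pos _).le (by linarith))
      (rpow_nonneg (sub_nonneg.2 hts) _)

/-- resolvent scaling bound.  For the resolvent `R̃(s,t)` of a linear system
whose generator `M(v)` is strictly lower block-subdiagonal (only blocks `(i,i-1)` may be
nonzero) with entries uniformly bounded by `L`, writing `R̃(s,t) = T_{s-t} R̂ T_{s-t}⁻¹`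
with `R̂ = T_{s-t}⁻¹ R̃(s,t) T_{s-t}` the resolvent at time `1` of the rescaled system,
there exists `Ĉ₁` (independent of `s, t` and of the generator) such that
`|R̂* ζ| ≤ Ĉ₁ |ζ|` for all `ζ ∈ ℝ^{nd}`; consequently
`|[R̃(s,t)]_{i,j}| ≤ Ĉ₁ (s-t)^{i-j}` for all block indices `i, j`.
(Here `(T_u)_{(i,j),(i,j)} = u^{i+1}` in Lean indexing, the paper block index being
`i+1`.) -/
theorem resolvent_scaling_bound (n d : ℕ) (hn : 1 ≤ n) (hd : 1 ≤ d)
    (T L : ℝ) (hT : 0 < T) (hL : 0 < L) :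
    ∃ C : ℝ, 0 < C ∧
      ∀ t s : ℝ, 0 ≤ t → t ≤ s → s ≤ T →
      ∀ M : ℝ → Matrix (Fin n × Fin d) (Fin n × Fin d) ℝ,
        (∀ v (p q : Fin n × Fin d), M v p q ≠ 0 → (p.1 : ℕ) = (q.1 : ℕ) + 1) →
        (∀ v (p q : Fin n × Fin d), |M v p q| ≤ L) →
      ∀ R : ℝ → Matrix (Fin n × Fin d) (Fin n × Fin d) ℝ,
        R t = 1 →
        (∀ v ∈ Set.Icc t s, ∀ p q : Fin n × Fin d,
          HasDerivAt (fun u => R u p q) ((M v * R v) p q) v) →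
        -- uniform bound for (the adjoint of) the rescaled resolvent
        -- `R̂ = T_{s-t}⁻¹ R̃(s,t) T_{s-t}`
        (t < s → ∀ ζ : (Fin n × Fin d) → ℝ,
          Real.sqrt (∑ q : Fin n × Fin d,
              (∑ p : Fin n × Fin d,
                (s - t) ^ (-(((p.1 : ℕ) : ℝ) + 1)) * R s p q
                  * (s - t) ^ (((q.1 : ℕ) : ℝ) + 1) * ζ p) ^ 2)
            ≤ C * Real.sqrt (∑ p : Fin n × Fin d, ζ p ^ 2)) ∧
        -- blockwise bound on the resolvent itself
        (∀ p q : Fin n × Fin d,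
          |R s p q| ≤ C * (s - t) ^ (((p.1 : ℕ) : ℝ) - ((q.1 : ℕ) : ℝ))) :=
  resolvent_scaling_bound_general n d T L hL
end
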